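/- For all τ, z in the stated domain, the following identity holds: −y ∏_{n≥1} (1−q^n)² ∏_{k∈{1,2,4}} (1−ζ₇^{−k}y⁻²q^{n−1}) (1−ζ₇^{k}y²q^n) / [ (1+y⁻¹q^{n−1})(1+yq^n) ∏_{k∈{1,2,4}} (1+ζ₇^{−k}y⁻¹q^{n−1}) (1+ζ₇^{k}yq^n) ] − y ∏_{n≥1} (1−q^n)² ∏_{k∈{1,2,4}} (1−ζ₇^{k}y⁻²q^{n−1}) (1−ζ₇^{−k}y²q^n) / [ (1+y⁻¹q^{n−1})(1+yq^n) ∏_{k∈{1,2,4}} (1+ζ₇^{k}y⁻¹q^{n−1}) (1+ζ₇^{−k}yq^n) ] = i ( η(7τ) / ( η(τ)⁴ θ₂(7τ,7z) ) ) · [ θ₁(τ,2z+1/7) θ₁(τ,2z+2/7) θ₁(τ,2z+4/7) θ₂(τ,z−1/7) θ₂(τ,z−2/7) θ₂(τ,z−4/7) + θ₁(τ,2z−1/7) θ₁(τ,2z−2/7) θ₁(τ,2z−4/7) θ₂(τ,z+1/7) θ₂(τ,z+2/7) θ₂(τ,z+4/7) ]. (This is the identity establishing that the graded trace attached to the classes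 14A and 14B of the umbral group G⁽⁴⁾ equals the umbral meromorphic Jacobi form ψ⁽⁴⁾_{14AB}.) -/

import Mathlib

open Complex

/-- Dedekind eta function via its infinite product:
    `η(τ) = e^{πiτ/12} ∏_{n≥1} (1 − e^{2πinτ})`. -/
noncomputable def Eta (τ : ℂ) : ℂ :=
  Complex.exp (Real.pi * Complex.I * τ / 12) *
    ∏' n : ℕ, (1 - Complex.exp (2 * Real.pi * Complex.I * ((n : ℂ) + 1) * τ))

/-- Jacobi theta function `θ₁` via its triple product expansion. -/
noncomputable def Theta1 (τ w : ℂ) : ℂ :=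
  -Complex.I * Complex.exp (Real.pi * Complex.I * τ / 4) *
    Complex.exp (Real.pi * Complex.I * w) *
    ∏' n : ℕ,
      ((1 - Complex.exp (-(2 * Real.pi * Complex.I * w)) *
            Complex.exp (2 * Real.pi * Complex.I * (n : ℂ) * τ)) *
       (1 - Complex.exp (2 * Real.pi * Complex.I * w) *
            Complex.exp (2 * Real.pi * Complex.I * ((n : ℂ) + 1) * τ)) *
       (1 - Complex.exp (2 * Real.pi * Complex.I * ((n : ℂ) + 1) * τ)))

/-- Jacobi theta function `θ₂` via its triple product expansion. -/
noncomputable def Theta2 (τ w : ℂ) : ℂ :=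
  Complex.exp (Real.pi * Complex.I * τ / 4) *
    Complex.exp (Real.pi * Complex.I * w) *
    ∏' n : ℕ,
      ((1 + Complex.exp (-(2 * Real.pi * Complex.I * w)) *
            Complex.exp (2 * Real.pi * Complex.I * (n : ℂ) * τ)) *
       (1 + Complex.exp (2 * Real.pi * Complex.I * w) *
            Complex.exp (2 * Real.pi * Complex.I * ((n : ℂ) + 1) * τ)) *
       (1 - Complex.exp (2 * Real.pi * Complex.I * ((n : ℂ) + 1) * τ)))

/-- A primitive seventh root of unity, `ζ₇ = e^{2πi/7}`. -/
noncomputable def zeta7 : ℂ := Complex.exp (2 * Real.pi * Complex.I / 7)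


/-!
Both products on the left are instances, at `c = ζ₇` and `c = ζ₇⁻¹`, of one product `∏ₙ tₙ(c)`,
and each instance equals one summand on the right. Written with q-Pochhammer symbols `(a; q)_∞`,
the triple products of `θ₁(τ, 2z + k/7)`, `k ∈ {1, 2, 4}`, reproduce the numerator of `tₙ(c)`,
while those of `θ₂(τ, z − k/7)` supply exactly the factors `1 + cʲ y⁻¹ qⁿ` and `1 + cʲ y qⁿ⁺¹`
(`j mod 7`) missing from its denominator. The complete products over `j mod 7` collapse, by
`∏ⱼ (1 + cʲ t) = 1 + t⁷`, to the triple product of `θ₂(7τ, 7z)`, and the exponential prefactors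
cancel up to `−y`.
-/

open scoped Real

section RootsOfUnity

open Finset Polynomial

theorem IsPrimitiveRoot.prod_range_one_add_mul {R : Type*} [CommRing R] [IsDomain R] {ζ : R}
    {n : ℕ} (hζ : IsPrimitiveRoot ζ n) (hn : Odd n) (t : R) :
    ∏ i ∈ range n, (1 + ζ ^ i * t) = 1 + t ^ n := by
  have := congrArg (eval 1) (X_pow_sub_C_eq_prod hζ hn.pos (rfl : (-t) ^ n = (-t) ^ n))
  simpa [eval_prod, hn.neg_pow, sub_eq_add_neg] using this.symm

theorem IsPrimitiveRoot.prod_one_add_mul_seven {K : Type*} [Field K] {c : K}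
    (hc : IsPrimitiveRoot c 7) (t : K) :
    (1 + t) * (1 + c * t) * (1 + c ^ 2 * t) * (1 + c ^ 4 * t) *
      (1 + c⁻¹ * t) * (1 + c⁻¹ ^ 2 * t) * (1 + c⁻¹ ^ 4 * t) = 1 + t ^ 7 := by
  have hinv (k : ℕ) (hk : k ≤ 7) : c⁻¹ ^ k = c ^ (7 - k) := by
    rw [inv_pow]
    exact inv_eq_of_mul_eq_one_right (by rw [← pow_add, Nat.add_sub_cancel' hk, hc.pow_eq_one])
  rw [hinv 2 (by norm_num), hinv 4 (by norm_num), ← pow_one c⁻¹, hinv 1 (by norm_num),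
    ← hc.prod_range_one_add_mul (by decide) t]
  simp only [prod_range_succ, prod_range_zero]
  ring

end RootsOfUnity

noncomputable def qPochhammer (a q : ℂ) : ℂ := ∏' n : ℕ, (1 - a * q ^ n)

section QPochhammer

variable {q : ℂ}

theorem summable_norm_mul_pow (hq : ‖q‖ < 1) (a : ℂ) : Summable fun n : ℕ ↦ ‖a * q ^ n‖ := by
  simpa [norm_mul, norm_pow] using (summable_geometric_of_lt_one (norm_nonneg _) hq).mul_left ‖a‖

theorem hasProd_qPochhammer (hq : ‖q‖ < 1) (a : ℂ) :
    HasProd (fun n : ℕ ↦ 1 - a * q ^ n) (qPochhammer a q) := by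
  refine Multipliable.hasProd ?_
  simp_rw [sub_eq_add_neg]
  exact multipliable_one_add_of_summable (by simpa using summable_norm_mul_pow hq a)

theorem hasProd_one_add_mul_pow (hq : ‖q‖ < 1) (a : ℂ) :
    HasProd (fun n : ℕ ↦ 1 + a * q ^ n) (qPochhammer (-a) q) :=
  (hasProd_qPochhammer hq (-a)).congr_fun fun n ↦ by ring

theorem hasProd_one_sub_mul_pow_succ (hq : ‖q‖ < 1) (a : ℂ) :
    HasProd (fun n : ℕ ↦ 1 - a * q ^ (n + 1)) (qPochhammer (a * q) q) :=
  (hasProd_qPochhammer hq (a * q)).congr_fun fun n ↦ by ring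

theorem hasProd_one_add_mul_pow_succ (hq : ‖q‖ < 1) (a : ℂ) :
    HasProd (fun n : ℕ ↦ 1 + a * q ^ (n + 1)) (qPochhammer (-(a * q)) q) :=
  (hasProd_qPochhammer hq (-(a * q))).congr_fun fun n ↦ by ring

theorem hasProd_one_sub_pow_succ (hq : ‖q‖ < 1) :
    HasProd (fun n : ℕ ↦ 1 - q ^ (n + 1)) (qPochhammer q q) :=
  (hasProd_qPochhammer hq q).congr_fun fun n ↦ by ring

theorem qPochhammer_ne_zero (hq : ‖q‖ < 1) {a : ℂ} (ha : ‖a‖ < 1) : qPochhammer a q ≠ 0 := by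
  simp_rw [qPochhammer, sub_eq_add_neg]
  refine tprod_one_add_ne_zero_of_summable (fun n h ↦ ?_) (by simpa using summable_norm_mul_pow hq a)
  have h1 : a * q ^ n = 1 := by linear_combination -h
  have : ‖a * q ^ n‖ < 1 := by
    rw [norm_mul, norm_pow]
    exact mul_lt_one_of_nonneg_of_lt_one_left (norm_nonneg _) ha (pow_le_one₀ (norm_nonneg _) hq.le)
  simp [h1] at this

theorem IsPrimitiveRoot.prod_qPochhammer_seven {c : ℂ} (hc : IsPrimitiveRoot c 7) (hq : ‖q‖ < 1)
    (t : ℂ) :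
    qPochhammer (-t) q * qPochhammer (-(c * t)) q * qPochhammer (-(c ^ 2 * t)) q *
        qPochhammer (-(c ^ 4 * t)) q * qPochhammer (-(c⁻¹ * t)) q *
        qPochhammer (-(c⁻¹ ^ 2 * t)) q * qPochhammer (-(c⁻¹ ^ 4 * t)) q =
      qPochhammer (-t ^ 7) (q ^ 7) := by
  have hq7 : ‖q ^ 7‖ < 1 := by
    rw [norm_pow]; exact pow_lt_one₀ (norm_nonneg _) hq (by norm_num)
  have h := hasProd_qPochhammer hq
  refine ((((((h _).mul (h _)).mul (h _)).mul (h _)).mul (h _)).mul (h _)).mul (h _) |>.unique <|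
    (hasProd_qPochhammer hq7 _).congr_fun fun n ↦ ?_
  linear_combination hc.prod_one_add_mul_seven (t * q ^ n)

end QPochhammer

/-- The `n`-th factor of the first product on the left of the theorem, with `ζ₇` replaced by `c`;
the second product is the case `c = ζ₇⁻¹`. -/
noncomputable def traceFactor (c y q : ℂ) (n : ℕ) : ℂ :=
  (1 - q ^ (n + 1)) ^ 2 *
      (1 - c⁻¹ * y⁻¹ ^ 2 * q ^ n) * (1 - c⁻¹ ^ 2 * y⁻¹ ^ 2 * q ^ n) *
      (1 - c⁻¹ ^ 4 * y⁻¹ ^ 2 * q ^ n) * (1 - c * y ^ 2 * q ^ (n + 1)) *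
      (1 - c ^ 2 * y ^ 2 * q ^ (n + 1)) * (1 - c ^ 4 * y ^ 2 * q ^ (n + 1)) /
    ((1 + y⁻¹ * q ^ n) * (1 + y * q ^ (n + 1)) *
      (1 + c⁻¹ * y⁻¹ * q ^ n) * (1 + c⁻¹ ^ 2 * y⁻¹ * q ^ n) *
      (1 + c⁻¹ ^ 4 * y⁻¹ * q ^ n) * (1 + c * y * q ^ (n + 1)) *
      (1 + c ^ 2 * y * q ^ (n + 1)) * (1 + c ^ 4 * y * q ^ (n + 1)))

theorem tprod_traceFactor_eq_div {q : ℂ} (hq : ‖q‖ < 1) (c y : ℂ)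
    (hD : qPochhammer (-y⁻¹) q * qPochhammer (-(y * q)) q * qPochhammer (-(c⁻¹ * y⁻¹)) q *
      qPochhammer (-(c⁻¹ ^ 2 * y⁻¹)) q * qPochhammer (-(c⁻¹ ^ 4 * y⁻¹)) q *
      qPochhammer (-(c * y * q)) q * qPochhammer (-(c ^ 2 * y * q)) q *
      qPochhammer (-(c ^ 4 * y * q)) q ≠ 0) :
    ∏' n, traceFactor c y q n =
      qPochhammer q q ^ 2 * qPochhammer (c⁻¹ * y⁻¹ ^ 2) q * qPochhammer (c⁻¹ ^ 2 * y⁻¹ ^ 2) q *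
        qPochhammer (c⁻¹ ^ 4 * y⁻¹ ^ 2) q * qPochhammer (c * y ^ 2 * q) q *
        qPochhammer (c ^ 2 * y ^ 2 * q) q * qPochhammer (c ^ 4 * y ^ 2 * q) q /
      (qPochhammer (-y⁻¹) q * qPochhammer (-(y * q)) q * qPochhammer (-(c⁻¹ * y⁻¹)) q *
        qPochhammer (-(c⁻¹ ^ 2 * y⁻¹)) q * qPochhammer (-(c⁻¹ ^ 4 * y⁻¹)) q *
        qPochhammer (-(c * y * q)) q * qPochhammer (-(c ^ 2 * y * q)) q *
        qPochhammer (-(c ^ 4 * y * q)) q) := by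
  have h := hasProd_qPochhammer hq
  have hs := hasProd_one_sub_mul_pow_succ hq
  have h' := hasProd_one_add_mul_pow hq
  have hs' := hasProd_one_add_mul_pow_succ hq
  exact ((((((((hasProd_one_sub_pow_succ hq).pow 2).mul (h _)).mul (h _)).mul (h _)).mul
    (hs _)).mul (hs _)).mul (hs _)).div₀
    ((((((((h' _).mul (hs' _)).mul (h' _)).mul (h' _)).mul (h' _)).mul (hs' _)).mul (hs' _)).mul
      (hs' _)) hD |>.tprod_eq

noncomputable def theta1Prod (q x : ℂ) : ℂ :=
  qPochhammer x⁻¹ q * qPochhammer (x * q) q * qPochhammer q q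

noncomputable def theta2Prod (q x : ℂ) : ℂ :=
  qPochhammer (-x⁻¹) q * qPochhammer (-(x * q)) q * qPochhammer q q

noncomputable def thetaQuotient (c y q : ℂ) : ℂ :=
  qPochhammer (q ^ 7) (q ^ 7) * theta1Prod q (c * y ^ 2) * theta1Prod q (c ^ 2 * y ^ 2) *
      theta1Prod q (c ^ 4 * y ^ 2) * theta2Prod q (c⁻¹ * y) * theta2Prod q (c⁻¹ ^ 2 * y) *
      theta2Prod q (c⁻¹ ^ 4 * y) /
    (qPochhammer q q ^ 4 * theta2Prod (q ^ 7) (y ^ 7))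

theorem tprod_traceFactor_eq_thetaQuotient {q y c : ℂ} (hq : ‖q‖ < 1) (hy : ‖y⁻¹‖ < 1)
    (hyq : ‖y * q‖ < 1) (hc : IsPrimitiveRoot c 7) :
    ∏' n, traceFactor c y q n = thetaQuotient c y q := by
  have hq7 : ‖q ^ 7‖ < 1 := by
    rw [norm_pow]; exact pow_lt_one₀ (norm_nonneg _) hq (by norm_num)
  have hW : theta2Prod (q ^ 7) (y ^ 7) ≠ 0 := by
    refine mul_ne_zero (mul_ne_zero ?_ ?_) (qPochhammer_ne_zero hq7 hq7) <;>
      refine qPochhammer_ne_zero hq7 ?_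
    · simpa [norm_pow] using pow_lt_one₀ (norm_nonneg _) hy (by norm_num : 7 ≠ 0)
    · simpa [← mul_pow, norm_pow] using pow_lt_one₀ (norm_nonneg _) hyq (by norm_num : 7 ≠ 0)
  have hW₁ := hc.prod_qPochhammer_seven hq y⁻¹
  have hW₂ := hc.prod_qPochhammer_seven hq (y * q)
  simp only [mul_pow, ← mul_assoc] at hW₂
  simp only [thetaQuotient, theta1Prod, theta2Prod, mul_inv, ← inv_pow, inv_inv, ← hW₁, ← hW₂]
    at hW ⊢
  have hD : qPochhammer (-y⁻¹) q * qPochhammer (-(y * q)) q * qPochhammer (-(c⁻¹ * y⁻¹)) q *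
      qPochhammer (-(c⁻¹ ^ 2 * y⁻¹)) q * qPochhammer (-(c⁻¹ ^ 4 * y⁻¹)) q *
      qPochhammer (-(c * y * q)) q * qPochhammer (-(c ^ 2 * y * q)) q *
      qPochhammer (-(c ^ 4 * y * q)) q ≠ 0 := by
    simp only [ne_eq, mul_eq_zero, not_or] at hW ⊢
    tauto
  rw [tprod_traceFactor_eq_div hq c y hD, div_eq_div_iff hD
    (mul_ne_zero (pow_ne_zero 4 (qPochhammer_ne_zero hq hq)) hW)]
  ring

theorem cexp_two_pi_I_mul_nat_mul (n : ℕ) (τ : ℂ) :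
    cexp (2 * π * I * n * τ) = cexp (2 * π * I * τ) ^ n := by
  rw [← exp_nat_mul]; ring_nf

theorem cexp_two_pi_I_mul_nat_add_one_mul (n : ℕ) (τ : ℂ) :
    cexp (2 * π * I * (n + 1) * τ) = cexp (2 * π * I * τ) ^ (n + 1) := by
  rw [← exp_nat_mul]; push_cast; ring_nf

section ThetaProducts

variable {τ q : ℂ}

theorem Eta_eq_qPochhammer (hq : cexp (2 * π * I * τ) = q) (hq1 : ‖q‖ < 1) :
    Eta τ = cexp (π * I * τ / 12) * qPochhammer q q := by
  simp only [Eta, cexp_two_pi_I_mul_nat_add_one_mul, hq, (hasProd_one_sub_pow_succ hq1).tprod_eq]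

theorem Theta1_eq_theta1Prod (hq : cexp (2 * π * I * τ) = q) (hq1 : ‖q‖ < 1) {w x : ℂ}
    (hx : cexp (2 * π * I * w) = x) :
    Theta1 τ w = -I * cexp (π * I * τ / 4) * cexp (π * I * w) * theta1Prod q x := by
  simp only [Theta1, theta1Prod, exp_neg, cexp_two_pi_I_mul_nat_mul,
    cexp_two_pi_I_mul_nat_add_one_mul, hq, hx,
    (((hasProd_qPochhammer hq1 _).mul (hasProd_one_sub_mul_pow_succ hq1 _)).mul
      (hasProd_one_sub_pow_succ hq1)).tprod_eq]

theorem Theta2_eq_theta2Prod (hq : cexp (2 * π * I * τ) = q) (hq1 : ‖q‖ < 1) {w x : ℂ}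
    (hx : cexp (2 * π * I * w) = x) :
    Theta2 τ w = cexp (π * I * τ / 4) * cexp (π * I * w) * theta2Prod q x := by
  simp only [Theta2, theta2Prod, exp_neg, cexp_two_pi_I_mul_nat_mul,
    cexp_two_pi_I_mul_nat_add_one_mul, hq, hx,
    (((hasProd_one_add_mul_pow hq1 _).mul (hasProd_one_add_mul_pow_succ hq1 _)).mul
      (hasProd_one_sub_pow_succ hq1)).tprod_eq]

end ThetaProducts

theorem eta_theta_quotient_eq {τ z d q y c : ℂ} (hq : q = cexp (2 * π * I * τ))
    (hy : y = cexp (2 * π * I * z)) (hd : cexp (2 * π * I * d) = c) (hq1 : ‖q‖ < 1) :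
    I * (Eta (7 * τ) / (Eta τ ^ 4 * Theta2 (7 * τ) (7 * z))) *
        (Theta1 τ (2 * z + d) * Theta1 τ (2 * z + 2 * d) * Theta1 τ (2 * z + 4 * d) *
          Theta2 τ (z - d) * Theta2 τ (z - 2 * d) * Theta2 τ (z - 4 * d)) =
      -y * thetaQuotient c y q := by
  have hq7 : ‖q ^ 7‖ < 1 := by
    rw [norm_pow]; exact pow_lt_one₀ (norm_nonneg _) hq1 (by norm_num)
  have e₇τ : cexp (2 * π * I * (7 * τ)) = q ^ 7 := by
    subst hq; rw [← exp_nat_mul]; ring_nf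
  have e₇z : cexp (2 * π * I * (7 * z)) = y ^ 7 := by
    subst hy; rw [← exp_nat_mul]; ring_nf
  have e₁ : cexp (2 * π * I * (2 * z + d)) = c * y ^ 2 := by
    subst hy hd; simp only [← exp_nat_mul, ← exp_add]; ring_nf
  have e₂ : cexp (2 * π * I * (2 * z + 2 * d)) = c ^ 2 * y ^ 2 := by
    subst hy hd; simp only [← exp_nat_mul, ← exp_add]; ring_nf
  have e₄ : cexp (2 * π * I * (2 * z + 4 * d)) = c ^ 4 * y ^ 2 := by
    subst hy hd; simp only [← exp_nat_mul, ← exp_add]; ring_nf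
  have f₁ : cexp (2 * π * I * (z - d)) = c⁻¹ * y := by
    subst hy hd; simp only [← exp_neg, ← exp_add]; ring_nf
  have f₂ : cexp (2 * π * I * (z - 2 * d)) = c⁻¹ ^ 2 * y := by
    subst hy hd; simp only [← exp_nat_mul, ← exp_neg, ← exp_add]; ring_nf
  have f₄ : cexp (2 * π * I * (z - 4 * d)) = c⁻¹ ^ 4 * y := by
    subst hy hd; simp only [← exp_nat_mul, ← exp_neg, ← exp_add]; ring_nf
  rw [Eta_eq_qPochhammer hq.symm hq1, Eta_eq_qPochhammer e₇τ hq7, Theta2_eq_theta2Prod e₇τ hq7 e₇z,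
    Theta1_eq_theta1Prod hq.symm hq1 e₁, Theta1_eq_theta1Prod hq.symm hq1 e₂,
    Theta1_eq_theta1Prod hq.symm hq1 e₄, Theta2_eq_theta2Prod hq.symm hq1 f₁,
    Theta2_eq_theta2Prod hq.symm hq1 f₂, Theta2_eq_theta2Prod hq.symm hq1 f₄]
  have hτ : cexp (π * I * (7 * τ) / 12) * cexp (π * I * τ / 4) ^ 6 /
      (cexp (π * I * τ / 12) ^ 4 * cexp (π * I * (7 * τ) / 4)) = 1 := by
    rw [div_eq_one_iff_eq (by simp [exp_ne_zero])]
    simp only [← exp_nat_mul, ← exp_add]; ring_nf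
  have hz : cexp (π * I * (2 * z + d)) * cexp (π * I * (2 * z + 2 * d)) *
      cexp (π * I * (2 * z + 4 * d)) * cexp (π * I * (z - d)) * cexp (π * I * (z - 2 * d)) *
      cexp (π * I * (z - 4 * d)) / cexp (π * I * (7 * z)) = y := by
    rw [div_eq_iff (exp_ne_zero _), hy]; simp only [← exp_add]; ring_nf
  have hI : I * (-I) ^ 3 = -1 := by ring_nf; rw [I_pow_four]
  calc _ = I * (-I) ^ 3 * (cexp (π * I * (7 * τ) / 12) * cexp (π * I * τ / 4) ^ 6 /
          (cexp (π * I * τ / 12) ^ 4 * cexp (π * I * (7 * τ) / 4))) *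
        (cexp (π * I * (2 * z + d)) * cexp (π * I * (2 * z + 2 * d)) *
          cexp (π * I * (2 * z + 4 * d)) * cexp (π * I * (z - d)) * cexp (π * I * (z - 2 * d)) *
          cexp (π * I * (z - 4 * d)) / cexp (π * I * (7 * z))) * thetaQuotient c y q := by
        rw [thetaQuotient]; ring
    _ = -y * thetaQuotient c y q := by rw [hI, hτ, hz]; ring

theorem neg_mul_tprod_traceFactor_eq {τ z d q y c : ℂ} (hz : 0 < -z.im) (hzτ : -z.im < τ.im)
    (hq : q = cexp (2 * π * I * τ)) (hy : y = cexp (2 * π * I * z))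
    (hd : cexp (2 * π * I * d) = c) (hc : IsPrimitiveRoot c 7) :
    -y * ∏' n, traceFactor c y q n =
      I * (Eta (7 * τ) / (Eta τ ^ 4 * Theta2 (7 * τ) (7 * z))) *
        (Theta1 τ (2 * z + d) * Theta1 τ (2 * z + 2 * d) * Theta1 τ (2 * z + 4 * d) *
          Theta2 τ (z - d) * Theta2 τ (z - 2 * d) * Theta2 τ (z - 4 * d)) := by
  have hexp {w : ℂ} (hw : 0 < w.im) : ‖cexp (2 * π * I * w)‖ < 1 :=
    UpperHalfPlane.norm_exp_two_pi_I_lt_one ⟨w, hw⟩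
  have hq1 : ‖q‖ < 1 := hq ▸ hexp (hz.trans hzτ)
  have hy1 : ‖y⁻¹‖ < 1 := by
    simpa [hy, ← exp_neg, ← mul_neg] using hexp (w := -z) (by simpa using hz)
  have hyq : ‖y * q‖ < 1 := by
    simpa [hy, hq, ← exp_add, ← mul_add] using hexp (w := z + τ) (by rw [add_im]; linarith)
  rw [eta_theta_quotient_eq hq hy hd hq1, tprod_traceFactor_eq_thetaQuotient hq1 hy1 hyq hc]

/-- Umbral moonshine identity for the classes 14A, 14B of G⁽⁴⁾: the graded trace equals ψ⁽⁴⁾_{14AB}. -/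
theorem stmt_15 (τ z : ℂ) (h1 : 0 < -z.im) (h2 : -z.im < τ.im)
    (q y : ℂ)
    (hq : q = Complex.exp (2 * Real.pi * Complex.I * τ))
    (hy : y = Complex.exp (2 * Real.pi * Complex.I * z)) :
    -y * (∏' n : ℕ,
      ((1 - q ^ (n + 1)) ^ 2 *
          (1 - zeta7⁻¹ * y⁻¹ ^ 2 * q ^ n) * (1 - zeta7⁻¹ ^ 2 * y⁻¹ ^ 2 * q ^ n) *
          (1 - zeta7⁻¹ ^ 4 * y⁻¹ ^ 2 * q ^ n) * (1 - zeta7 * y ^ 2 * q ^ (n + 1)) *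
          (1 - zeta7 ^ 2 * y ^ 2 * q ^ (n + 1)) * (1 - zeta7 ^ 4 * y ^ 2 * q ^ (n + 1)) /
        ((1 + y⁻¹ * q ^ n) * (1 + y * q ^ (n + 1)) *
          (1 + zeta7⁻¹ * y⁻¹ * q ^ n) * (1 + zeta7⁻¹ ^ 2 * y⁻¹ * q ^ n) *
          (1 + zeta7⁻¹ ^ 4 * y⁻¹ * q ^ n) * (1 + zeta7 * y * q ^ (n + 1)) *
          (1 + zeta7 ^ 2 * y * q ^ (n + 1)) * (1 + zeta7 ^ 4 * y * q ^ (n + 1)))))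
    - y * (∏' n : ℕ,
      ((1 - q ^ (n + 1)) ^ 2 *
          (1 - zeta7 * y⁻¹ ^ 2 * q ^ n) * (1 - zeta7 ^ 2 * y⁻¹ ^ 2 * q ^ n) *
          (1 - zeta7 ^ 4 * y⁻¹ ^ 2 * q ^ n) * (1 - zeta7⁻¹ * y ^ 2 * q ^ (n + 1)) *
          (1 - zeta7⁻¹ ^ 2 * y ^ 2 * q ^ (n + 1)) * (1 - zeta7⁻¹ ^ 4 * y ^ 2 * q ^ (n + 1)) /
        ((1 + y⁻¹ * q ^ n) * (1 + y * q ^ (n + 1)) *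
          (1 + zeta7 * y⁻¹ * q ^ n) * (1 + zeta7 ^ 2 * y⁻¹ * q ^ n) *
          (1 + zeta7 ^ 4 * y⁻¹ * q ^ n) * (1 + zeta7⁻¹ * y * q ^ (n + 1)) *
          (1 + zeta7⁻¹ ^ 2 * y * q ^ (n + 1)) * (1 + zeta7⁻¹ ^ 4 * y * q ^ (n + 1)))))
    = Complex.I * (Eta (7 * τ) / ((Eta τ) ^ 4 * Theta2 (7 * τ) (7 * z))) *
        (Theta1 τ (2 * z + 1 / 7) * Theta1 τ (2 * z + 2 / 7) * Theta1 τ (2 * z + 4 / 7) *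
            Theta2 τ (z - 1 / 7) * Theta2 τ (z - 2 / 7) * Theta2 τ (z - 4 / 7) +
          Theta1 τ (2 * z - 1 / 7) * Theta1 τ (2 * z - 2 / 7) * Theta1 τ (2 * z - 4 / 7) *
            Theta2 τ (z + 1 / 7) * Theta2 τ (z + 2 / 7) * Theta2 τ (z + 4 / 7)) := by
  have hζ : IsPrimitiveRoot zeta7 7 := Complex.isPrimitiveRoot_exp 7 (by norm_num)
  have hplus := neg_mul_tprod_traceFactor_eq h1 h2 hq hy (d := 1 / 7)
    (by rw [zeta7, mul_one_div]) hζ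
  have hminus := neg_mul_tprod_traceFactor_eq h1 h2 hq hy (d := -(1 / 7))
    (by rw [zeta7, mul_neg, exp_neg, mul_one_div]) hζ.inv
  simp only [traceFactor, inv_inv, mul_one_div, mul_neg, ← sub_eq_add_neg, sub_neg_eq_add]
    at hplus hminus
  linear_combination hplus + hminus
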